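/- arXiv:1507.08753 — 2 statements merged into one kernel-verified Lean document; each statement's English description precedes it below -/
import Mathlib

section
/- In the ring A = Z_3[[a_1, b_1, a_2, b_2]]/(a_1 b_1 - 3, a_2 b_2 - 3), the prime ideal P generated by the images of a_1 and a_2 has height 1. -/
/-! The ring `A = ℤ₃[[a₁, b₁, a₂, b₂]] / (a₁b₁ - 3, a₂b₂ - 3)`, where `ℤ₃ = ℤ_[3]` is the
ring of 3-adic integers: the completed local ring of the family of compactified jacobians
at the point `[I]`, `I = ν⁎𝒪(-2)`, in Kass's example. -/

/-- The formal power series ring `ℤ₃[[a₁, b₁, a₂, b₂]]` in four variables over the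
3-adic integers. -/
abbrev B : Type := MvPowerSeries (Fin 4) ℤ_[3]

/-- The ideal `(a₁b₁ - 3, a₂b₂ - 3)` of `ℤ₃[[a₁, b₁, a₂, b₂]]`, where `a₁, b₁, a₂, b₂`
are the four variables. -/
noncomputable abbrev relIdeal : Ideal B :=
  Ideal.span {MvPowerSeries.X 0 * MvPowerSeries.X 1 - 3,
    MvPowerSeries.X 2 * MvPowerSeries.X 3 - 3}

/-- The ring `A = ℤ₃[[a₁, b₁, a₂, b₂]] / (a₁b₁ - 3, a₂b₂ - 3)`. -/
abbrev A : Type := B ⧸ relIdeal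

/-- The image `a₁` in `A` of the first variable. -/
noncomputable def a1 : A := Ideal.Quotient.mk relIdeal (MvPowerSeries.X 0)

/-- The image `b₁` in `A` of the second variable. -/
noncomputable def b1 : A := Ideal.Quotient.mk relIdeal (MvPowerSeries.X 1)

/-- The image `a₂` in `A` of the third variable. -/
noncomputable def a2 : A := Ideal.Quotient.mk relIdeal (MvPowerSeries.X 2)

/-- The image `b₂` in `A` of the fourth variable. -/
noncomputable def b2 : A := Ideal.Quotient.mk relIdeal (MvPowerSeries.X 3)

/-!
`P` is the image of `(a₁, a₂, 3) ⊇ (a₁b₁ - 3, a₂b₂ - 3)`, the preimage of the prime `(a₂)` under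
the surjection `ℤ₃[[a₁, b₁, a₂, b₂]] → 𝔽₃[[b₁, a₂, b₂]]` reducing modulo `3` and setting `a₁ = 0`.
A prime `Q` with `a₁ ∈ Q ⊆ P` contains `3 = a₂b₂` but not `b₂`, so `a₂ ∈ Q`: `P` is minimal over
`(a₁)` and Krull's principal ideal theorem bounds its height by `1`. Conversely `P` is not a
minimal prime, since `a₁` divides the non-zero-divisor `3`.
That `3` is a non-zero-divisor is the Koszul argument: if `3f = g₁(a₁b₁ - 3) + g₂(a₂b₂ - 3)`,
then modulo `3` the relation `ḡ₁a₁b₁ + ḡ₂a₂b₂ = 0` in the domain `𝔽₃[[a₁, b₁, a₂, b₂]]`, whose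
variables are prime, forces `g₁ ≡ a₂b₂c`, `g₂ ≡ -a₁b₁c`; as
`a₂b₂(a₁b₁ - 3) - a₁b₁(a₂b₂ - 3) = 3((a₁b₁ - 3) - (a₂b₂ - 3))`, the factor `3` cancels.
-/

namespace MvPowerSeries

instance {σ R : Type*} [CommRing R] [IsDomain R] : IsDomain (MvPowerSeries σ R) :=
  NoZeroDivisors.to_isDomain _

section CommRing

variable {σ R : Type*} [CommRing R]

theorem X_ne_zero [Nontrivial R] (i : σ) : (X i : MvPowerSeries σ R) ≠ 0 := by
  intro h
  simpa [coeff_X] using congrArg (coeff (Finsupp.single i 1)) h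

theorem X_dvd_X_iff [Nontrivial R] {i j : σ} : (X i : MvPowerSeries σ R) ∣ X j ↔ i = j := by
  refine ⟨fun h => ?_, fun h => h ▸ dvd_rfl⟩
  by_contra hij
  have := X_dvd_iff.mp h (Finsupp.single j 1) (by simp [Ne.symm hij])
  simp at this

theorem map_surjective {S : Type*} [CommRing S] (f : R →+* S) (hf : Function.Surjective f) :
    Function.Surjective (map (σ := σ) f) := fun g =>
  ⟨fun d => Function.surjInv hf (coeff d g), ext fun d => Function.surjInv_eq hf (coeff d g)⟩

theorem ker_map_of_ker_eq_span_singleton {S : Type*} [CommRing S] {f : R →+* S} {p : R}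
    (hf : RingHom.ker f = Ideal.span {p}) :
    RingHom.ker (map (σ := σ) f) = Ideal.span {C p} := by
  ext φ
  simp only [RingHom.mem_ker, Ideal.mem_span_singleton]
  constructor
  · intro h
    have hdvd (d : σ →₀ ℕ) : p ∣ coeff d φ := by
      rw [← Ideal.mem_span_singleton, ← hf, RingHom.mem_ker, ← coeff_map, h, map_zero]
    choose ψ hψ using hdvd
    exact ⟨ψ, ext fun d => (hψ d).trans (coeff_C_mul d ψ p).symm⟩
  · rintro ⟨ψ, rfl⟩
    have : f p = 0 := by rw [← RingHom.mem_ker, hf]; exact Ideal.mem_span_singleton_self p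
    rw [map_mul, map_C, this, map_zero, zero_mul]

theorem ker_map_toZMod {p : ℕ} [Fact p.Prime] :
    RingHom.ker (map (σ := σ) (PadicInt.toZMod (p := p))) =
      Ideal.span {(p : MvPowerSeries σ ℤ_[p])} := by
  rw [ker_map_of_ker_eq_span_singleton
    (PadicInt.ker_toZMod.trans PadicInt.maximalIdeal_eq_span_p), map_natCast]

theorem map_toZMod_surjective {p : ℕ} [Fact p.Prime] :
    Function.Surjective (map (σ := σ) (PadicInt.toZMod (p := p))) :=
  map_surjective _ (ZMod.ringHom_surjective _)

end CommRing

section FinSucc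

variable {R : Type*} [CommRing R] {n : ℕ}

/-- The substitution `X 0 ↦ 0`. -/
noncomputable def finSuccConstantCoeff (R : Type*) [CommRing R] (n : ℕ) :
    MvPowerSeries (Fin (n + 1)) R →+* MvPowerSeries (Fin n) R :=
  PowerSeries.constantCoeff.comp (finSuccEquiv R n).toRingEquiv.toRingHom

theorem finSuccConstantCoeff_surjective : Function.Surjective (finSuccConstantCoeff R n) :=
  PowerSeries.constantCoeff_surj.comp (finSuccEquiv R n).surjective

theorem finSuccConstantCoeff_X_succ (j : Fin n) : finSuccConstantCoeff R n (X j.succ) = X j := by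
  simp [finSuccConstantCoeff, finSuccEquiv_X_succ]

theorem ker_finSuccConstantCoeff :
    RingHom.ker (finSuccConstantCoeff R n) = Ideal.span {X 0} := by
  ext f
  rw [RingHom.mem_ker, Ideal.mem_span_singleton, finSuccConstantCoeff, RingHom.comp_apply,
    ← PowerSeries.X_dvd_iff, ← finSuccEquiv_X_zero]
  exact map_dvd_iff (finSuccEquiv R n)

theorem prime_X_zero [IsDomain R] : Prime (X 0 : MvPowerSeries (Fin (n + 1)) R) := by
  rw [← Ideal.span_singleton_prime (X_ne_zero 0), ← ker_finSuccConstantCoeff]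
  exact RingHom.ker_isPrime _

theorem prime_X [IsDomain R] (i : Fin (n + 1)) : Prime (X i : MvPowerSeries (Fin (n + 1)) R) := by
  rw [← MulEquiv.prime_iff (renameEquiv R (Equiv.swap 0 i))]
  simpa [renameEquiv_apply, rename_X] using prime_X_zero

theorem X_dvd_of_X_dvd_mul_X_mul_X [IsDomain R] {i j k : Fin (n + 1)} (hj : i ≠ j) (hk : i ≠ k)
    {a : MvPowerSeries (Fin (n + 1)) R} (h : X i ∣ a * (X j * X k)) : X i ∣ a := by
  rcases (prime_X i).dvd_or_dvd h with h | h
  · exact h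
  · rcases (prime_X i).dvd_or_dvd h with h | h <;> simp_all [X_dvd_X_iff]

end FinSucc

theorem exists_eq_of_mul_X_mul_X_add_mul_X_mul_X_eq_zero {R : Type*} [CommRing R] [IsDomain R]
    {a b : MvPowerSeries (Fin 4) R} (h : a * (X 0 * X 1) + b * (X 2 * X 3) = 0) :
    ∃ c, a = X 2 * X 3 * c ∧ b = -(X 0 * X 1 * c) := by
  have hab : a * (X 0 * X 1) = -b * X 2 * X 3 := by linear_combination h
  obtain ⟨a', rfl⟩ : X 2 ∣ a := X_dvd_of_X_dvd_mul_X_mul_X (i := 2) (j := 0) (k := 1)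
    (by decide) (by decide) ⟨-b * X 3, by rw [hab]; ring⟩
  have hab' : a' * (X 0 * X 1) = -b * X 3 :=
    mul_left_cancel₀ (X_ne_zero 2) (by linear_combination hab)
  obtain ⟨c, rfl⟩ : X 3 ∣ a' := X_dvd_of_X_dvd_mul_X_mul_X (i := 3) (j := 0) (k := 1)
    (by decide) (by decide) ⟨-b, by rw [hab']; ring⟩
  refine ⟨c, by ring, ?_⟩
  have : X 2 * X 3 * (b + X 0 * X 1 * c) = 0 := by linear_combination h
  linear_combination (mul_eq_zero.mp this).resolve_left (mul_ne_zero (X_ne_zero 2) (X_ne_zero 3))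

end MvPowerSeries

open MvPowerSeries

theorem map_toZMod_eq_zero_iff {f : B} : map PadicInt.toZMod f = 0 ↔ 3 ∣ f := by
  rw [← RingHom.mem_ker, ker_map_toZMod, Nat.cast_ofNat, Ideal.mem_span_singleton]

theorem mem_relIdeal_of_three_mul_mem {f : B} (h : 3 * f ∈ relIdeal) : f ∈ relIdeal := by
  obtain ⟨g₁, g₂, hg⟩ := Ideal.mem_span_pair.mp h
  have hred :
      map PadicInt.toZMod g₁ * (X 0 * X 1) + map PadicInt.toZMod g₂ * (X 2 * X 3) = 0 := by
    have h3 : map PadicInt.toZMod (3 : B) = 0 := map_toZMod_eq_zero_iff.mpr dvd_rfl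
    simpa [h3] using congrArg (map PadicInt.toZMod) hg
  obtain ⟨c, hc₁, hc₂⟩ := exists_eq_of_mul_X_mul_X_add_mul_X_mul_X_eq_zero hred
  obtain ⟨c, rfl⟩ := map_toZMod_surjective c
  obtain ⟨u₁, hu₁⟩ : 3 ∣ g₁ - X 2 * X 3 * c :=
    map_toZMod_eq_zero_iff.mp (by simp [hc₁])
  obtain ⟨u₂, hu₂⟩ : 3 ∣ g₂ + X 0 * X 1 * c :=
    map_toZMod_eq_zero_iff.mp (by simp [hc₂])
  have three_ne_zero : (3 : B) ≠ 0 := fun h => by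
    have := congrArg (constantCoeff (σ := Fin 4) (R := ℤ_[3])) h
    rw [map_ofNat, map_zero] at this
    norm_num at this
  refine Ideal.mem_span_pair.mpr ⟨c + u₁, u₂ - c, mul_left_cancel₀ three_ne_zero ?_⟩
  linear_combination hg - (X 0 * X 1 - 3) * hu₁ - (X 2 * X 3 - 3) * hu₂

theorem span_X0_X2_three_eq_comap :
    (Ideal.span {X 0, X 2, 3} : Ideal B) =
      (Ideal.span {X 1}).comap ((map PadicInt.toZMod).comp (finSuccConstantCoeff ℤ_[3] 3)) := by
  have hκ : (Ideal.span {X 2, 3} : Ideal B).map (finSuccConstantCoeff ℤ_[3] 3) =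
      Ideal.span {X 1, 3} := by
    rw [Ideal.map_span, Set.image_pair, map_ofNat, show (2 : Fin 4) = Fin.succ 1 from rfl,
      finSuccConstantCoeff_X_succ]
  calc (Ideal.span {X 0, X 2, 3} : Ideal B)
      = ((Ideal.span {X 2, 3}).map (finSuccConstantCoeff ℤ_[3] 3)).comap
          (finSuccConstantCoeff ℤ_[3] 3) := by
        rw [Ideal.comap_map_of_surjective' _ finSuccConstantCoeff_surjective,
          ker_finSuccConstantCoeff, sup_comm, ← Ideal.span_insert]
    _ = (((Ideal.span {X 1}).map (map PadicInt.toZMod)).comap (map PadicInt.toZMod)).comap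
          (finSuccConstantCoeff ℤ_[3] 3) := by
        rw [Ideal.comap_map_of_surjective' _ map_toZMod_surjective, ker_map_toZMod,
          Nat.cast_ofNat, ← Ideal.span_insert, hκ]
    _ = _ := by rw [Ideal.map_span, Set.image_singleton, map_X, Ideal.comap_comap]

theorem isPrime_span_X0_X2_three : (Ideal.span {X 0, X 2, 3} : Ideal B).IsPrime := by
  rw [span_X0_X2_three_eq_comap]
  have := (Ideal.span_singleton_prime (X_ne_zero 1)).mpr (prime_X (R := ZMod 3) (n := 2) 1)
  exact Ideal.comap_isPrime _ _

theorem X3_notMem_span_X0_X2_three : X 3 ∉ (Ideal.span {X 0, X 2, 3} : Ideal B) := by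
  rw [span_X0_X2_three_eq_comap, Ideal.mem_comap, RingHom.comp_apply,
    show (3 : Fin 4) = Fin.succ 2 from rfl, finSuccConstantCoeff_X_succ, map_X,
    Ideal.mem_span_singleton, X_dvd_X_iff]
  decide

theorem relIdeal_le_span_X0_X2_three : relIdeal ≤ Ideal.span {X 0, X 2, 3} := by
  rw [Ideal.span_le]
  rintro _ (rfl | rfl) <;>
    exact sub_mem (Ideal.mul_mem_right _ _ (Ideal.subset_span (by simp)))
      (Ideal.subset_span (by simp))

theorem a1_mul_b1 : a1 * b1 = 3 := by
  rw [a1, b1, ← map_mul, ← map_ofNat (Ideal.Quotient.mk relIdeal) 3, Ideal.Quotient.eq]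
  exact Ideal.subset_span (by simp)

theorem a2_mul_b2 : a2 * b2 = 3 := by
  rw [a2, b2, ← map_mul, ← map_ofNat (Ideal.Quotient.mk relIdeal) 3, Ideal.Quotient.eq]
  exact Ideal.subset_span (by simp)

theorem span_a1_a2_eq_map :
    Ideal.span {a1, a2} = (Ideal.span {X 0, X 2, 3}).map (Ideal.Quotient.mk relIdeal) := by
  rw [Ideal.map_span, Set.image_insert_eq, Set.image_pair, map_ofNat, ← a1_mul_b1]
  refine le_antisymm (Ideal.span_mono (Set.insert_subset_insert (by simp [a2]))) ?_
  rw [Ideal.span_le]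
  rintro _ (rfl | rfl | rfl)
  · exact Ideal.subset_span (by simp [a1])
  · exact Ideal.subset_span (by simp [a2])
  · exact Ideal.mul_mem_right _ _ (Ideal.subset_span (by simp))

theorem isPrime_span_a1_a2 : (Ideal.span {a1, a2} : Ideal A).IsPrime := by
  rw [span_a1_a2_eq_map]
  have := isPrime_span_X0_X2_three
  exact Ideal.map_isPrime_of_surjective Ideal.Quotient.mk_surjective
    ((Ideal.mk_ker).trans_le relIdeal_le_span_X0_X2_three)

theorem b2_notMem_span_a1_a2 : b2 ∉ (Ideal.span {a1, a2} : Ideal A) := by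
  rw [span_a1_a2_eq_map, b2, ← Ideal.mem_comap, Ideal.comap_map_of_surjective'
    _ Ideal.Quotient.mk_surjective, Ideal.mk_ker, sup_eq_left.mpr relIdeal_le_span_X0_X2_three]
  exact X3_notMem_span_X0_X2_three

theorem span_a1_a2_mem_minimalPrimes :
    (Ideal.span {a1, a2} : Ideal A) ∈ (Ideal.span {a1}).minimalPrimes := by
  refine ⟨⟨isPrime_span_a1_a2, Ideal.span_mono (by simp)⟩, fun Q ⟨hQ, ha₁⟩ hQP => ?_⟩
  have ha1Q : a1 ∈ Q := ha₁ (Ideal.mem_span_singleton_self a1)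
  have : a2 * b2 ∈ Q := by rw [a2_mul_b2, ← a1_mul_b1]; exact Q.mul_mem_right b1 ha1Q
  have ha2Q : a2 ∈ Q := (hQ.mem_or_mem this).resolve_right fun h => b2_notMem_span_a1_a2 (hQP h)
  exact Ideal.span_le.mpr (by rintro _ (rfl | rfl) <;> assumption)

theorem three_mem_nonZeroDivisors : (3 : A) ∈ nonZeroDivisors A := by
  rw [mem_nonZeroDivisors_iff_right]
  intro x hx
  obtain ⟨f, rfl⟩ := Ideal.Quotient.mk_surjective x
  rw [← map_ofNat (Ideal.Quotient.mk relIdeal) 3, ← map_mul, Ideal.Quotient.eq_zero_iff_mem,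
    mul_comm] at hx
  exact Ideal.Quotient.eq_zero_iff_mem.mpr (mem_relIdeal_of_three_mul_mem hx)

theorem a1_mem_nonZeroDivisors : a1 ∈ nonZeroDivisors A :=
  (mul_mem_nonZeroDivisors.mp (a1_mul_b1 ▸ three_mem_nonZeroDivisors)).1

/-- In `A`, the prime ideal `P = (a₁, a₂)` has height `1` (as a point of the prime
spectrum of `A`, ordered by inclusion). -/
theorem span_a1_a2_height_one : ∃ hP : (Ideal.span {a1, a2} : Ideal A).IsPrime,
    Order.height (⟨Ideal.span {a1, a2}, hP⟩ : PrimeSpectrum A) = 1 := by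
  refine ⟨isPrime_span_a1_a2, ?_⟩
  rw [← PrimeSpectrum.height_eq_orderHeight]
  refine le_antisymm (Ideal.height_le_one_of_isPrincipal_of_mem_minimalPrimes _ _
    span_a1_a2_mem_minimalPrimes) ?_
  exact (Ideal.one_le_height_span_singleton_of_mem_nonZeroDivisors a1_mem_nonZeroDivisors).trans
    (Ideal.height_mono (Ideal.span_mono (by simp)))
end

section
/- In the ring A = Z_3[[a_1, b_1, a_2, b_2]]/(a_1 b_1 - 3, a_2 b_2 - 3), the ideal P generated by the images of a_1 and a_2 is not a principal ideal. -/
/-! Reducing mod 3 and taking the 1-jet at the origin defines a ring map from `A` to the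
square-zero extension `𝔽₃ ⊕ 𝔽₃⁴`: both relations die, since `aᵢbᵢ` has no constant or linear
part and `3 ↦ 0`. It sends `a₁, a₂` to two linearly independent square-zero elements, and in a
square-zero extension `R ⊕ M` the ideal generated by `u, v ∈ M` independent is not principal:
a generator `g` would lie in `M`, and then `u` and `v` would both be scalar multiples of `g`. -/

open MvPowerSeries TrivSqZeroExt

namespace MvPowerSeries

variable {σ R : Type*} [CommSemiring R]

noncomputable def oneJet : MvPowerSeries σ R →+* TrivSqZeroExt R (σ → R) where
  toFun f := inl (constantCoeff f) + inr fun i => constantCoeff (pderiv R i f)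
  map_one' := by ext <;> simp
  map_mul' f g := by
    ext i
    · simp
    · simp [Derivation.leibniz, add_comm]
  map_zero' := by ext <;> simp
  map_add' f g := by ext <;> simp [add_add_add_comm]

@[simp] theorem fst_oneJet (f : MvPowerSeries σ R) : (oneJet f).fst = constantCoeff f := by
  simp [oneJet]

@[simp] theorem snd_oneJet (f : MvPowerSeries σ R) (i : σ) :
    (oneJet f).snd i = constantCoeff (pderiv R i f) := by
  simp [oneJet]

theorem oneJet_X [DecidableEq σ] (i : σ) :
    oneJet (X i : MvPowerSeries σ R) = inr (Pi.single i 1) := by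
  ext j
  · simp
  · simp [pderiv_X, Pi.single_apply, eq_comm]

theorem oneJet_X_mul_X (i j : σ) : oneJet (X i * X j : MvPowerSeries σ R) = 0 := by
  classical
  rw [map_mul, oneJet_X, oneJet_X, inr_mul_inr]

end MvPowerSeries

namespace TrivSqZeroExt

variable {R M : Type*} [CommRing R] [Nontrivial R] [AddCommGroup M] [Module R M]
  [Module Rᵐᵒᵖ M] [IsCentralScalar R M]

theorem not_isPrincipal_span_inr_pair {u v : M} (huv : LinearIndependent R ![u, v]) :
    ¬ (Ideal.span {inr u, inr v} : Ideal (TrivSqZeroExt R M)).IsPrincipal := by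
  rintro ⟨g, hg⟩
  rw [Ideal.submodule_span_eq] at hg
  have hg_fst : g.fst = 0 := by
    obtain ⟨a, b, hab⟩ := Ideal.mem_span_pair.mp (hg ▸ Ideal.mem_span_singleton_self g)
    simp [← hab]
  have smul_snd {w : M} (hw : inr w ∈ Ideal.span {g}) : ∃ c : R, w = c • g.snd := by
    obtain ⟨a, ha⟩ := Ideal.mem_span_singleton'.mp hw
    exact ⟨a.fst, by simpa [hg_fst] using congr_arg snd ha.symm⟩
  obtain ⟨a, rfl⟩ := smul_snd (w := u) (hg ▸ Ideal.subset_span (by simp))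
  obtain ⟨b, rfl⟩ := smul_snd (w := v) (hg ▸ Ideal.subset_span (by simp))
  obtain ⟨-, ha⟩ := LinearIndependent.pair_iff.mp huv b (-a) (by
    rw [smul_smul, smul_smul, mul_comm, neg_mul, neg_smul, add_neg_cancel])
  exact huv.ne_zero 0 (by simp [neg_eq_zero.mp ha])

end TrivSqZeroExt

theorem Pi.linearIndependent_single_one_pair {ι R : Type*} [Ring R] [DecidableEq ι]
    {i j : ι} (hij : i ≠ j) : LinearIndependent R ![(Pi.single i 1 : ι → R), Pi.single j 1] := by
  refine LinearIndependent.pair_iff.mpr fun s t hst => ⟨?_, ?_⟩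
  · simpa [hij] using congr_fun hst i
  · simpa [hij.symm] using congr_fun hst j

theorem relIdeal_le_ker_oneJet_map_toZMod :
    relIdeal ≤ RingHom.ker (oneJet.comp (map (PadicInt.toZMod (p := 3)))) := by
  have three_eq_zero : (3 : MvPowerSeries (Fin 4) (ZMod 3)) = 0 :=
    (map_ofNat C 3).symm.trans (map_zero C)
  rw [Ideal.span_le, Set.pair_subset_iff]
  constructor <;> simp [map_ofNat, three_eq_zero, oneJet_X_mul_X]

noncomputable def jetModThree : A →+* TrivSqZeroExt (ZMod 3) (Fin 4 → ZMod 3) :=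
  Ideal.Quotient.lift relIdeal _ fun _ hf =>
    RingHom.mem_ker.mp (relIdeal_le_ker_oneJet_map_toZMod hf)

theorem jetModThree_mk_X (i : Fin 4) :
    jetModThree (Ideal.Quotient.mk relIdeal (X i)) = inr (Pi.single i 1) := by
  rw [jetModThree, Ideal.Quotient.lift_mk, RingHom.comp_apply, map_X, oneJet_X]

/-- In `A`, the ideal `P = (a₁, a₂)` generated by the images of `a₁` and `a₂` is not a
principal ideal. -/
theorem span_a1_a2_not_principal : ¬ (Ideal.span {a1, a2} : Ideal A).IsPrincipal := by
  intro h
  have h_image := h.map_ringHom jetModThree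
  rw [Ideal.map_span, Set.image_pair, a1, a2, jetModThree_mk_X, jetModThree_mk_X] at h_image
  have h_indep := Pi.linearIndependent_single_one_pair (R := ZMod 3) (by decide : (0 : Fin 4) ≠ 2)
  exact TrivSqZeroExt.not_isPrincipal_span_inr_pair h_indep h_image
end
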